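/- Let n, k : ℕ and m : ℕ with 2m ≤ nk, and let i : ℕ satisfy 1 ≤ i ≤ m + 1. Then the kernel of D on the image D^{i-1}(Q_n(k,m)) is exactly the space of semi-invariants of weight m − i + 1: { J : ∃ I ∈ Q_n(k,m), J = D^{i-1}(I) and D(J) = 0 } = S_n(k, m − i + 1). In particular, every semi-invariant of degree k and weight m − i + 1 lies in D^{i-1}(Q_n(k,m)). -/

import Mathlib

/-!
`D` lowers and `Δ` raises the weight by one without changing the degree, and their commutator
`[D, Δ] = Σ (n - 2i) a_i ∂/∂a_i` acts on `Q_n(k, w)` as the scalar `nk - 2w` (Euler's identity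
for the bigrading by degree and weight), so `D`, `Δ` and `[D, Δ]` form an `sl₂`-triple.
For a semi-invariant `J` of weight `m - r` the `sl₂` relations give
`D^r Δ^r J = ∏_{s<r} (s + 1)(nk - 2(m - r) - s) • J`, and `2m ≤ nk` makes every factor positive.
Hence `J = D^r I` for a multiple `I` of `Δ^r J ∈ Q_n(k, m)`; the other inclusion only says that
`D^r` maps `Q_n(k, m)` into `Q_n(k, m - r)`.
-/

open MvPolynomial

/-- The operator `D(I) = Σ_{i=1}^{n} i · a_{i-1} · ∂I/∂a_i`. -/
noncomputable def Dop (n : ℕ) :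
    MvPolynomial (Fin (n+1)) ℚ →ₗ[ℚ] MvPolynomial (Fin (n+1)) ℚ :=
  ∑ i : Fin n, ((i : ℚ) + 1) •
    ((LinearMap.mulLeft ℚ (X i.castSucc)).comp (pderiv i.succ).toLinearMap)

/-- The operator `Δ(I) = Σ_{i=0}^{n-1} (n-i) · a_{i+1} · ∂I/∂a_i`. -/
noncomputable def Δop (n : ℕ) :
    MvPolynomial (Fin (n+1)) ℚ →ₗ[ℚ] MvPolynomial (Fin (n+1)) ℚ :=
  ∑ i : Fin n, ((n : ℚ) - (i : ℚ)) •
    ((LinearMap.mulLeft ℚ (X i.succ)).comp (pderiv i.castSucc).toLinearMap)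

/-- `Q_n(k,m)`: span of monomials of degree `k` and weight `m`. -/
noncomputable def Qspace (n k m : ℕ) : Submodule ℚ (MvPolynomial (Fin (n+1)) ℚ) :=
  Submodule.span ℚ { p | ∃ ν : Fin (n+1) →₀ ℕ,
    (∑ i : Fin (n+1), ν i) = k ∧ (∑ i : Fin (n+1), (i : ℕ) * ν i) = m ∧ p = monomial ν (1 : ℚ) }

/-- `S_n(k,m)`: semi-invariants of degree `k` and weight `m`. -/
noncomputable def Sspace (n k m : ℕ) : Submodule ℚ (MvPolynomial (Fin (n+1)) ℚ) :=
  Qspace n k m ⊓ LinearMap.ker (Dop n)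

/-- `p(k,n,m)`: number of partitions of `m` in a `k × n` rectangle. -/
def pRect (k n m : ℕ) : ℕ :=
  (Finset.univ.filter
    (fun P : Nat.Partition m => Multiset.card P.parts ≤ k ∧ ∀ x ∈ P.parts, x ≤ n)).card

/-- Coefficient embedding `ℚ[a] → ℚ[z][a]`. -/
noncomputable def ιmap (n : ℕ) :
    MvPolynomial (Fin (n+1)) ℚ →+* MvPolynomial (Fin (n+1)) (Polynomial ℚ) :=
  MvPolynomial.map (Polynomial.C)

/-- The shear substitution `a_i ↦ a_i' = Σ_{j=0}^{i} C(i,j) a_{i-j} z^j`. -/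
noncomputable def φmap (n : ℕ) :
    MvPolynomial (Fin (n+1)) ℚ →ₐ[ℚ] MvPolynomial (Fin (n+1)) (Polynomial ℚ) :=
  aeval (fun i : Fin (n+1) => ∑ j ∈ Finset.range ((i : ℕ) + 1),
    (C ((Nat.choose (i : ℕ) j : Polynomial ℚ) * Polynomial.X ^ j)) *
      X (⟨(i : ℕ) - j, Nat.lt_of_le_of_lt (Nat.sub_le _ _) i.isLt⟩ : Fin (n+1)))

/-- The vertical shear substitution `a_i ↦ a_i'' = Σ_{j=0}^{n-i} C(n-i,j) a_{i+j} z^j`. -/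
noncomputable def ψmap (n : ℕ) :
    MvPolynomial (Fin (n+1)) ℚ →ₐ[ℚ] MvPolynomial (Fin (n+1)) (Polynomial ℚ) :=
  aeval (fun i : Fin (n+1) => ∑ j ∈ (Finset.range (n - (i : ℕ) + 1)).attach,
    (C ((Nat.choose (n - (i : ℕ)) j.1 : Polynomial ℚ) * Polynomial.X ^ j.1)) *
      X (⟨(i : ℕ) + j.1, by
        have h1 := Finset.mem_range.mp j.2
        have h2 := i.isLt
        omega⟩ : Fin (n+1)))

/-- The weighted total degree of `I`: max of `Σ_i i·ν_i` over monomials of `I`. -/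
def wdeg (n : ℕ) (I : MvPolynomial (Fin (n+1)) ℚ) : ℕ :=
  I.support.sup (fun ν => ∑ i : Fin (n+1), (i : ℕ) * ν i)

lemma Derivation.sum_apply {R A M ι : Type*} [CommSemiring R] [CommSemiring A] [Algebra R A]
    [AddCommMonoid M] [Module A M] [Module R M] (s : Finset ι) (D : ι → Derivation R A M) (a : A) :
    (∑ i ∈ s, D i) a = ∑ i ∈ s, D i a := by
  simp only [← Derivation.coeFnAddMonoidHom_apply, map_sum, Finset.sum_apply]

section Sl2

variable {K V : Type*} [CommRing K] [AddCommGroup V] [Module K V] {D Δ : Module.End K V} {c : K}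
  {J : V}

lemma lower_apply_raise_pow_succ (hJ : D J = 0)
    (hcomm : ∀ s : ℕ, D (Δ ((Δ ^ s) J)) - Δ (D ((Δ ^ s) J)) = (c - 2 * s) • (Δ ^ s) J) (r : ℕ) :
    D ((Δ ^ (r + 1)) J) = ((r + 1) * (c - r)) • (Δ ^ r) J := by
  induction r with
  | zero => simpa [hJ] using hcomm 0
  | succ r ih =>
    rw [pow_succ', Module.End.mul_apply, ← sub_add_cancel (D _) (Δ (D _)), hcomm, ih, map_smul,
      ← Module.End.mul_apply, ← pow_succ', ← add_smul]
    push_cast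
    ring_nf

lemma lower_pow_apply_raise_pow (hJ : D J = 0)
    (hcomm : ∀ s : ℕ, D (Δ ((Δ ^ s) J)) - Δ (D ((Δ ^ s) J)) = (c - 2 * s) • (Δ ^ s) J) (r : ℕ) :
    (D ^ r) ((Δ ^ r) J) = (∏ s ∈ Finset.range r, ((s + 1) * (c - s))) • J := by
  induction r with
  | zero => simp
  | succ r ih =>
    rw [pow_succ, Module.End.mul_apply, lower_apply_raise_pow_succ hJ hcomm, map_smul, ih,
      smul_smul, Finset.prod_range_succ, mul_comm]

end Sl2

namespace MvPolynomial

variable {σ R M N : Type*} [CommSemiring R]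

lemma IsWeightedHomogeneous.comp_addMonoidHom [AddCommMonoid M] [AddCommMonoid N]
    {w : σ → M} {φ : MvPolynomial σ R} {m : M} (h : φ.IsWeightedHomogeneous w m) (f : M →+ N) :
    φ.IsWeightedHomogeneous (f ∘ w) (f m) := by
  intro d hd
  rw [← h hd, Finsupp.weight_apply, Finsupp.weight_apply, map_finsuppSum]
  simp

lemma isWeightedHomogeneous_comp_addMonoidHom_iff [AddCommMonoid M] [AddCommMonoid N]
    {w : σ → M} {φ : MvPolynomial σ R} {m : M} {f : M →+ N} (hf : Function.Injective f) :
    φ.IsWeightedHomogeneous (f ∘ w) (f m) ↔ φ.IsWeightedHomogeneous w m := by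
  refine ⟨fun h d hd => hf ?_, fun h => h.comp_addMonoidHom f⟩
  rw [← h hd, Finsupp.weight_apply, Finsupp.weight_apply, map_finsuppSum]
  simp

lemma IsWeightedHomogeneous.X_mul_pderiv [AddCommGroup M] {w : σ → M} {φ : MvPolynomial σ R}
    {m : M} (h : φ.IsWeightedHomogeneous w m) (a b : σ) :
    (X a * pderiv b φ).IsWeightedHomogeneous w (m - w b + w a) := by
  rw [add_comm]
  exact (isWeightedHomogeneous_X R w a).mul (h.pderiv (sub_add_cancel m (w b)))

end MvPolynomial

def bidegree (n : ℕ) (i : Fin (n+1)) : ℕ × ℕ := (1, i)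

lemma weight_bidegree {n : ℕ} (ν : Fin (n+1) →₀ ℕ) :
    Finsupp.weight (bidegree n) ν = (∑ i, ν i, ∑ i : Fin (n+1), (i : ℕ) * ν i) := by
  simp [Finsupp.weight_eq_sum, bidegree, Prod.ext_iff, Prod.fst_sum, Prod.snd_sum, mul_comm]

lemma Qspace_eq_weightedHomogeneousSubmodule (n k m : ℕ) :
    Qspace n k m = weightedHomogeneousSubmodule ℚ (bidegree n) (k, m) := by
  rw [weightedHomogeneousSubmodule_eq_finsupp_supported, AddMonoidAlgebra.supported_eq_span_single,
    Qspace]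
  congr 1
  ext p
  simp [weight_bidegree, eq_comm (a := p), single_eq_monomial, and_assoc]

lemma mem_Qspace_iff {n k m : ℕ} {p : MvPolynomial (Fin (n+1)) ℚ} :
    p ∈ Qspace n k m ↔ p.IsWeightedHomogeneous (bidegree n) (k, m) := by
  rw [Qspace_eq_weightedHomogeneousSubmodule, mem_weightedHomogeneousSubmodule]

lemma X_mul_pderiv_mem_Qspace {n k w w' : ℕ} {p : MvPolynomial (Fin (n+1)) ℚ}
    (hp : p ∈ Qspace n k w) {a b : Fin (n+1)} (h : w + a = w' + b) :
    X a * pderiv b p ∈ Qspace n k w' := by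
  -- Over `ℤ × ℤ` the shifted weight `(k, w) - bidegree b + bidegree a` exists even when `b > w`.
  let f : ℕ × ℕ →+ ℤ × ℤ := (Nat.castAddMonoidHom ℤ).prodMap (Nat.castAddMonoidHom ℤ)
  have hf : Function.Injective f := Nat.cast_injective.prodMap Nat.cast_injective
  have hweight : f (k, w') = f (k, w) - f (bidegree n b) + f (bidegree n a) := by
    simp only [f, bidegree, AddMonoidHom.coe_prodMap, Nat.coe_castAddMonoidHom, Prod.map_apply,
      Nat.cast_one, Prod.mk_sub_mk, Prod.mk_add_mk, sub_add_cancel, Prod.ext_iff, true_and]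
    omega
  rw [mem_Qspace_iff] at hp ⊢
  rw [← isWeightedHomogeneous_comp_addMonoidHom_iff hf, hweight]
  exact (hp.comp_addMonoidHom f).X_mul_pderiv a b

lemma sum_smul_X_mul_pderiv_of_mem_Qspace {n k m : ℕ} {p : MvPolynomial (Fin (n+1)) ℚ}
    (hp : p ∈ Qspace n k m) :
    ∑ i : Fin (n+1), ((n : ℚ) - 2 * i) • (X i * pderiv i p) = ((n : ℚ) * k - 2 * m) • p := by
  rw [mem_Qspace_iff] at hp
  have hdeg : ∑ i, X i * pderiv i p = (k : ℚ) • p := by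
    rw [Nat.cast_smul_eq_nsmul]
    exact IsHomogeneous.sum_X_mul_pderiv (hp.comp_addMonoidHom (AddMonoidHom.fst ℕ ℕ))
  have hwt : ∑ i : Fin (n+1), ((i : ℕ) : ℚ) • (X i * pderiv i p) = (m : ℚ) • p := by
    simp only [Nat.cast_smul_eq_nsmul]
    exact (hp.comp_addMonoidHom (AddMonoidHom.snd ℕ ℕ)).sum_weight_X_mul_pderiv
  simp only [sub_smul, Finset.sum_sub_distrib, mul_smul, ← Finset.smul_sum, hdeg, hwt]

lemma Dop_apply (n : ℕ) (p : MvPolynomial (Fin (n+1)) ℚ) :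
    Dop n p = ∑ i : Fin n, ((i : ℚ) + 1) • (X i.castSucc * pderiv i.succ p) := by
  simp [Dop, LinearMap.sum_apply]

lemma Δop_apply (n : ℕ) (p : MvPolynomial (Fin (n+1)) ℚ) :
    Δop n p = ∑ i : Fin n, ((n : ℚ) - i) • (X i.succ * pderiv i.castSucc p) := by
  simp [Δop, LinearMap.sum_apply]

lemma Dop_mem_Qspace {n k m : ℕ} {p : MvPolynomial (Fin (n+1)) ℚ} (hp : p ∈ Qspace n k (m + 1)) :
    Dop n p ∈ Qspace n k m := by
  rw [Dop_apply]
  refine Submodule.sum_mem _ fun i _ => Submodule.smul_mem _ _ (X_mul_pderiv_mem_Qspace hp ?_)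
  simp only [Fin.val_castSucc, Fin.val_succ]
  omega

lemma Δop_mem_Qspace {n k m : ℕ} {p : MvPolynomial (Fin (n+1)) ℚ} (hp : p ∈ Qspace n k m) :
    Δop n p ∈ Qspace n k (m + 1) := by
  rw [Δop_apply]
  refine Submodule.sum_mem _ fun i _ => Submodule.smul_mem _ _ (X_mul_pderiv_mem_Qspace hp ?_)
  simp only [Fin.val_castSucc, Fin.val_succ]
  omega

lemma Dop_pow_mem_Qspace {n k m r : ℕ} {p : MvPolynomial (Fin (n+1)) ℚ}
    (hp : p ∈ Qspace n k (m + r)) : (Dop n ^ r) p ∈ Qspace n k m := by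
  induction r generalizing m with
  | zero => simpa using hp
  | succ r ih =>
    rw [pow_succ', Module.End.mul_apply]
    exact Dop_mem_Qspace (ih (by rwa [add_right_comm]))

lemma Δop_pow_mem_Qspace {n k m r : ℕ} {p : MvPolynomial (Fin (n+1)) ℚ}
    (hp : p ∈ Qspace n k m) : (Δop n ^ r) p ∈ Qspace n k (m + r) := by
  induction r with
  | zero => simpa using hp
  | succ r ih =>
    rw [pow_succ', Module.End.mul_apply, ← add_assoc]
    exact Δop_mem_Qspace ih

section Derivations

variable (n : ℕ)

noncomputable def Dder : Derivation ℚ (MvPolynomial (Fin (n+1)) ℚ) (MvPolynomial (Fin (n+1)) ℚ) :=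
  ∑ i : Fin n, ((i : ℚ) + 1) • (X i.castSucc : MvPolynomial (Fin (n+1)) ℚ) • pderiv i.succ

noncomputable def Δder : Derivation ℚ (MvPolynomial (Fin (n+1)) ℚ) (MvPolynomial (Fin (n+1)) ℚ) :=
  ∑ i : Fin n, ((n : ℚ) - i) • (X i.succ : MvPolynomial (Fin (n+1)) ℚ) • pderiv i.castSucc

noncomputable def Eder : Derivation ℚ (MvPolynomial (Fin (n+1)) ℚ) (MvPolynomial (Fin (n+1)) ℚ) :=
  ∑ i : Fin (n+1), ((n : ℚ) - 2 * i) • (X i : MvPolynomial (Fin (n+1)) ℚ) • pderiv i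

lemma Dder_apply (p : MvPolynomial (Fin (n+1)) ℚ) : Dder n p = Dop n p := by
  simp [Dder, Dop_apply, Derivation.sum_apply]

lemma Δder_apply (p : MvPolynomial (Fin (n+1)) ℚ) : Δder n p = Δop n p := by
  simp [Δder, Δop_apply, Derivation.sum_apply]

lemma Eder_apply (p : MvPolynomial (Fin (n+1)) ℚ) :
    Eder n p = ∑ i : Fin (n+1), ((n : ℚ) - 2 * i) • (X i * pderiv i p) := by
  simp [Eder, Derivation.sum_apply]

variable {n}

lemma Dder_X (j : Fin (n+1)) : Dder n (X j) = (j : ℚ) • X (j - 1) := by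
  rw [Dder_apply, Dop_apply]
  cases j using Fin.cases with
  | zero => simp [pderiv_X, Fin.succ_ne_zero]
  | succ j =>
    rw [← Fin.coeSucc_eq_succ, add_sub_cancel_right]
    simp [pderiv_X, Pi.single_apply]

lemma Δder_X (j : Fin (n+1)) : Δder n (X j) = ((n : ℚ) - j) • X (j + 1) := by
  rw [Δder_apply, Δop_apply]
  cases j using Fin.lastCases with
  | last => simp [pderiv_X, Fin.castSucc_ne_last]
  | cast j => simp [pderiv_X, Pi.single_apply, Fin.castSucc_inj]

lemma Eder_X (j : Fin (n+1)) : Eder n (X j) = ((n : ℚ) - 2 * j) • X j := by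
  simp [Eder_apply, pderiv_X, Pi.single_apply]

end Derivations

lemma lie_Dder_Δder (n : ℕ) : ⁅Dder n, Δder n⁆ = Eder n := by
  refine derivation_ext fun j => ?_
  rw [Derivation.commutator_apply, Δder_X, Dder_X, Derivation.map_smul, Derivation.map_smul, Dder_X,
    Δder_X, Eder_X, add_sub_cancel_right, sub_add_cancel, smul_smul, smul_smul, ← sub_smul]
  have hraise : ((n : ℚ) - j) * ((j + 1 : Fin (n+1)) : ℕ) = (n - j) * (j + 1) := by
    rw [Fin.val_add_one]
    split_ifs with hlast
    · simp [hlast]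
    · push_cast; rfl
  have hlower : (j : ℚ) * (n - ((j - 1 : Fin (n+1)) : ℕ)) = j * (n - j + 1) := by
    rw [Fin.coe_sub_one]
    split_ifs with hzero
    · simp [hzero]
    · rw [Nat.cast_pred (Fin.pos_iff_ne_zero.mpr hzero)]; ring
  rw [hraise, hlower]
  congr 1
  ring

lemma Dop_Δop_sub_Δop_Dop {n k m : ℕ} {p : MvPolynomial (Fin (n+1)) ℚ} (hp : p ∈ Qspace n k m) :
    Dop n (Δop n p) - Δop n (Dop n p) = ((n : ℚ) * k - 2 * m) • p := by
  have h := DFunLike.congr_fun (lie_Dder_Δder n) p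
  rwa [Derivation.commutator_apply, Eder_apply, sum_smul_X_mul_pderiv_of_mem_Qspace hp,
    Dder_apply, Dder_apply, Δder_apply, Δder_apply] at h

lemma Dop_pow_Δop_pow_of_mem_Sspace {n k m : ℕ} {J : MvPolynomial (Fin (n+1)) ℚ}
    (hJ : J ∈ Sspace n k m) (r : ℕ) :
    (Dop n ^ r) ((Δop n ^ r) J)
      = (∏ s ∈ Finset.range r, ((s + 1) * ((n * k - 2 * m : ℚ) - s))) • J := by
  refine lower_pow_apply_raise_pow hJ.2 (fun s => ?_) r
  rw [Dop_Δop_sub_Δop_Dop (Δop_pow_mem_Qspace hJ.1)]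
  congr 1
  push_cast
  ring

/-- the kernel of `D` on `D^{i-1}(Q_n(k,m))` is exactly `S_n(k, m-i+1)`. -/
theorem ker_D_on_image (n k m : ℕ) (h : 2 * m ≤ n * k) (i : ℕ) (hi1 : 1 ≤ i)
    (hi2 : i ≤ m + 1) :
    {J : MvPolynomial (Fin (n+1)) ℚ |
        ∃ I ∈ Qspace n k m, J = (Dop n ^ (i - 1)) I ∧ Dop n J = 0}
      = ↑(Sspace n k (m + 1 - i)) := by
  obtain ⟨r, rfl⟩ : ∃ r, i = r + 1 := ⟨i - 1, by omega⟩
  obtain ⟨m', rfl⟩ : ∃ m', m = m' + r := ⟨m - r, by omega⟩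
  rw [Nat.add_sub_cancel, Nat.add_sub_add_right, Nat.add_sub_cancel]
  ext J
  simp only [Set.mem_ofPred_eq, SetLike.mem_coe, Sspace, Submodule.mem_inf, LinearMap.mem_ker]
  constructor
  · rintro ⟨I, hI, rfl, hDJ⟩
    exact ⟨Dop_pow_mem_Qspace hI, hDJ⟩
  · rintro ⟨hJ, hDJ⟩
    set P : ℚ := ∏ s ∈ Finset.range r, ((s + 1) * ((n * k - 2 * m' : ℚ) - s))
    have hpos : 0 < P := by
      refine Finset.prod_pos fun s hs => mul_pos (by positivity) ?_
      have hs : (s : ℚ) + 1 ≤ r := by exact_mod_cast Finset.mem_range.mp hs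
      have hnk : (2 * (m' + r) : ℚ) ≤ n * k := by exact_mod_cast h
      linarith
    refine ⟨P⁻¹ • (Δop n ^ r) J, Submodule.smul_mem _ _ (Δop_pow_mem_Qspace hJ), ?_, hDJ⟩
    rw [map_smul, Dop_pow_Δop_pow_of_mem_Sspace ⟨hJ, hDJ⟩, smul_smul, inv_mul_cancel₀ hpos.ne',
      one_smul]
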